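/- Let X be a connected subset of the plane ℝ² and let x ∈ B(X), where B(X) is the set of points x ∈ X such that every neighborhood of x contains a simple closed curve J ⊆ X whose bounded complementary domain (interior in ℝ²) is not contained in X. Then every homotopy H : X × [0,1] → X with H(·,0) = id_X satisfies H(x,t) = x for all t. -/

import Mathlib

open Set Function Topology

/-- The plane. -/
abbrev Plane := EuclideanSpace ℝ (Fin 2)

/-- The unit circle in ℝ². -/
abbrev Circle1 : Set Plane := Metric.sphere 0 1

/-- `J` is a simple closed curve: a homeomorphic (continuous injective,
hence embedded) image of the circle. -/
def IsSimpleClosedCurve (J : Set Plane) : Prop :=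
  ∃ e : ↥Circle1 → Plane, Continuous e ∧ Injective e ∧ range e = J

/-- The interior of a simple closed curve `J` in the plane: the union of the
bounded complementary components of `J`. -/
def sccInterior (J : Set Plane) : Set Plane :=
  {x | x ∉ J ∧ Bornology.IsBounded (connectedComponentIn Jᶜ x)}

/-- The bad set of a planar set `X`: points `x ∈ X` each of whose neighborhoods
contains a simple closed curve lying in `X` whose interior is not contained
in `X`. -/
def badSet (X : Set Plane) : Set Plane :=
  {x ∈ X | ∀ U ∈ nhds x, ∃ J : Set Plane, IsSimpleClosedCurve J ∧
    J ⊆ U ∩ X ∧ ¬ sccInterior J ⊆ X}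

/-!
Suppose `H` moves `x` at time `t₀`. By continuity, `H(·, t₀)` maps a small ball around `x` into a
ball around `H(x, t₀)` far from `x`. Take a curve `J ⊆ X` in the small ball and a point `p` of its
interior outside `X`; `p` lies in the small ball too, since otherwise the loop `z ↦ z - p` would
stay in a ball missing the origin and so have a continuous logarithm. For the same reason
`z ↦ H(z, t₀) - p` has a continuous logarithm on `J`, and `s ↦ H(·, s)` deforms it to `z ↦ z - p`
inside `ℂ ∖ 0` because `H` takes values in `X ∌ p`. But `z ↦ z - p` has no continuous logarithm
on `J`: extending one to the plane (Tietze) would give a map that is the identity off the bounded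
component of `Jᶜ` containing `p` and omits `p`, and on a large circle around `p` this map is the
winding loop and null-homotopic at the same time.
-/

open Metric Bornology unitInterval

instance : PathConnectedSpace I :=
  isPathConnected_iff_pathConnectedSpace.mp
    ((convex_Icc 0 1).isPathConnected (nonempty_Icc.2 zero_le_one))

def HasContinuousLog {A : Type*} [TopologicalSpace A] (f : A → ℂ) : Prop :=
  ∃ θ : A → ℂ, Continuous θ ∧ ∀ a, Complex.exp (θ a) = f a

section HasContinuousLog
variable {A : Type*} [TopologicalSpace A]

theorem hasContinuousLog_const {c : ℂ} (hc : c ≠ 0) : HasContinuousLog fun _ : A => c :=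
  ⟨fun _ => Complex.log c, continuous_const, fun _ => Complex.exp_log hc⟩

theorem hasContinuousLog_of_norm_sub_lt {g : A → ℂ} (hg : Continuous g) {c : ℂ}
    (h : ∀ a, ‖g a - c‖ < ‖c‖) : HasContinuousLog g := by
  have hc : ∀ a, c ≠ 0 := fun a hc => by simpa [hc] using (norm_nonneg _).trans_lt (h a)
  have hslit : ∀ a, g a / c ∈ Complex.slitPlane := fun a => by
    have := Complex.mem_slitPlane_of_norm_lt_one (z := (g a - c) / c) (by
      rw [norm_div, div_lt_one (norm_pos_iff.2 (hc a))]; exact h a)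
    rwa [sub_div, div_self (hc a), add_sub_cancel] at this
  refine ⟨fun a => Complex.log c + Complex.log (g a / c),
    continuous_const.add ((hg.div_const c).clog hslit), fun a => ?_⟩
  rw [Complex.exp_add, Complex.exp_log (hc a),
    Complex.exp_log (Complex.slitPlane_ne_zero (hslit a)), mul_div_cancel₀ _ (hc a)]

theorem HasContinuousLog.of_homotopy {T : Type*} [TopologicalSpace T] [PathConnectedSpace T]
    {F : T × A → ℂ} (hF : Continuous F) (hF0 : ∀ q, F q ≠ 0) {t₀ t₁ : T}
    (h : HasContinuousLog fun a => F (t₀, a)) : HasContinuousLog fun a => F (t₁, a) := by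
  obtain ⟨θ, hθc, hθ⟩ := h
  let γ := PathConnectedSpace.somePath t₀ t₁
  let Φ : C(I × A, {z : ℂ // z ≠ 0}) := ⟨fun q => ⟨F (γ q.1, q.2), hF0 _⟩, by fun_prop⟩
  have hΦ₀ : ∀ a, Φ (0, a) = ⟨Complex.exp (θ a), Complex.exp_ne_zero _⟩ := fun a => by
    ext; simp [Φ, hθ]
  refine ⟨fun a => Complex.isCoveringMap_exp.liftHomotopy Φ ⟨θ, hθc⟩ hΦ₀ (1, a), by fun_prop,
    fun a => ?_⟩
  have := congr_fun (Complex.isCoveringMap_exp.liftHomotopy_lifts Φ ⟨θ, hθc⟩ hΦ₀) (1, a)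
  simpa [Φ] using congr_arg Subtype.val this

end HasContinuousLog

theorem not_hasContinuousLog_sphere {r : ℝ} (hr : 0 < r) :
    ¬ HasContinuousLog fun z : sphere (0 : ℂ) r => (z : ℂ) := by
  rintro ⟨ψ, hψc, hψ⟩
  let winding : I → ℂ := fun t => 2 * Real.pi * Complex.I * t
  let loop : I → sphere (0 : ℂ) r := fun t => ⟨r * Complex.exp (winding t), by
    simp [winding, Complex.norm_exp, abs_of_pos hr]⟩
  let γ : C(I, {z : ℂ // z ≠ 0}) := ⟨fun t => ⟨loop t, by simp [loop, hr.ne']⟩, by fun_prop⟩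
  have hγ₀ : γ 0 = ⟨Complex.exp (ψ (loop 0)), Complex.exp_ne_zero _⟩ := by ext; simp [γ, hψ]
  have lift_eq : ∀ Γ : I → ℂ, Continuous Γ → (∀ t, Complex.exp (Γ t) = loop t) →
      Γ 0 = ψ (loop 0) → Γ = Complex.isCoveringMap_exp.liftPath γ _ hγ₀ := fun Γ hΓc hΓ hΓ₀ =>
    (Complex.isCoveringMap_exp.eq_liftPath_iff hγ₀).2
      ⟨hΓc, funext fun t => Subtype.ext (hΓ t), hΓ₀⟩
  have hexp : ∀ t, Complex.exp (ψ (loop 0) + winding t) = loop t := fun t => by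
    simp [Complex.exp_add, hψ, loop, winding, mul_comm]
  have h := congr_fun ((lift_eq _ (by fun_prop) (fun t => hψ _) rfl).trans
    (lift_eq _ (by fun_prop) hexp (by simp [winding])).symm) 1
  have hloop₁ : loop 1 = loop 0 := by ext; simp [loop, winding]
  simp [hloop₁, winding, Real.pi_ne_zero] at h

theorem frontier_connectedComponentIn_subset {α : Type*} [TopologicalSpace α]
    [LocallyConnectedSpace α] {U : Set α} (hU : IsOpen U) (x : α) :
    frontier (connectedComponentIn U x) ⊆ Uᶜ := by
  intro w hw hwU
  rw [hU.connectedComponentIn.frontier_eq] at hw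
  obtain ⟨u, huw, hux⟩ := _root_.mem_closure_iff.1 hw.1 _ hU.connectedComponentIn
    (mem_connectedComponentIn hwU)
  exact hw.2 ((connectedComponentIn_eq hux).trans (connectedComponentIn_eq huw).symm ▸
    mem_connectedComponentIn hwU)

noncomputable def toComplex : Plane ≃ₗᵢ[ℝ] ℂ := Complex.orthonormalBasisOneI.repr.symm

theorem hasContinuousLog_sub_of_forall_mem_ball {A : Type*} [TopologicalSpace A] {f : A → Plane}
    (hf : Continuous f) {x p : Plane} {r : ℝ} (hfx : ∀ a, f a ∈ ball x r) (hp : p ∉ ball x r) :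
    HasContinuousLog fun a => toComplex (f a - p) :=
  hasContinuousLog_of_norm_sub_lt (c := toComplex (x - p)) (by fun_prop) fun a => by
    rw [← map_sub, sub_sub_sub_cancel_right, toComplex.norm_map, toComplex.norm_map,
      ← dist_eq_norm, ← dist_eq_norm, dist_comm x]
    exact (mem_ball.1 (hfx a)).trans_le (not_lt.1 hp)

theorem surjective_of_eqOn_compl_isBounded {G : Plane → Plane} (hG : Continuous G) {S : Set Plane}
    (hS : IsBounded S) (hGS : EqOn G id Sᶜ) : Surjective G := by
  intro p
  by_contra! hp
  obtain ⟨R, hR, hSR⟩ := hS.subset_ball_lt 0 p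
  have hF : Continuous fun q : I × sphere (0 : ℂ) R =>
      toComplex (G (p + (q.1 : ℝ) • toComplex.symm q.2) - p) := by fun_prop
  have hF0 : ∀ q : I × sphere (0 : ℂ) R,
      toComplex (G (p + (q.1 : ℝ) • toComplex.symm q.2) - p) ≠ 0 := fun q => by
    simpa [sub_eq_zero] using hp _
  have h₀ : HasContinuousLog fun w : sphere (0 : ℂ) R =>
      toComplex (G (p + ((0 : I) : ℝ) • toComplex.symm w) - p) := by
    simpa using hasContinuousLog_const (A := sphere (0 : ℂ) R) (hF0 (0, ⟨R, by simp [hR.le]⟩))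
  refine not_hasContinuousLog_sphere hR ?_
  convert h₀.of_homotopy hF hF0 (t₁ := 1) using 3 with w
  have hw : p + toComplex.symm w ∉ S := fun hw => by
    simpa using mem_ball.1 (hSR hw)
  simp [hGS hw]

theorem not_hasContinuousLog_sub_of_mem_sccInterior {J : Set Plane} (hJ : IsClosed J) {p : Plane}
    (hp : p ∈ sccInterior J) : ¬ HasContinuousLog fun z : J => toComplex (z - p) := by
  rintro ⟨θ, hθc, hθ⟩
  obtain ⟨θ', hθ'⟩ := ContinuousMap.exists_restrict_eq hJ ⟨θ, hθc⟩
  set K := connectedComponentIn Jᶜ p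
  classical
  let G := K.piecewise (fun z => p + toComplex.symm (Complex.exp (θ' z))) id
  have hG : Continuous G := by
    refine Continuous.piecewise (fun z hz => ?_) (by fun_prop) continuous_id
    have hzJ : z ∈ J := by simpa using frontier_connectedComponentIn_subset hJ.isOpen_compl p hz
    have : θ' z = θ ⟨z, hzJ⟩ := DFunLike.congr_fun hθ' ⟨z, hzJ⟩
    simp [this, hθ]
  obtain ⟨z, hz⟩ := surjective_of_eqOn_compl_isBounded hG hp.2
    (fun z hz => Set.piecewise_eq_of_notMem _ _ _ hz) p
  by_cases hzK : z ∈ K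
  · simp [G, hzK] at hz
  · simp only [G, Set.piecewise_eq_of_notMem _ _ _ hzK, id] at hz
    exact hzK (hz ▸ mem_connectedComponentIn hp.1)

theorem stmt_12_general (X : Set Plane)
    (x : Plane) (hx : x ∈ badSet X) (hxX : x ∈ X)
    (H : ↥X × ↥(Set.Icc (0 : ℝ) 1) → ↥X) (hH : Continuous H)
    (hH0 : ∀ y : ↥X, H (y, ⟨0, Set.left_mem_Icc.mpr zero_le_one⟩) = y) :
    ∀ t : ↥(Set.Icc (0 : ℝ) 1), H (⟨x, hxX⟩, t) = ⟨x, hxX⟩ := by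
  intro t₀
  by_contra hne
  set y : Plane := (H (⟨x, hxX⟩, t₀) : Plane)
  have hxy : x ≠ y := fun h => hne (Subtype.ext h.symm)
  set δ := dist x y / 2 with hδ_def
  have hδ : 0 < δ := half_pos (dist_pos.2 hxy)
  obtain ⟨ε, hε, hHε⟩ := Metric.continuousAt_iff.1
    ((hH.comp (Continuous.prodMk_left t₀)).continuousAt (x := ⟨x, hxX⟩)) δ hδ
  obtain ⟨J, ⟨e, he, -, rfl⟩, hJ, hJX⟩ :=
    hx.2 (ball x (min ε δ)) (ball_mem_nhds x (lt_min hε hδ))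
  obtain ⟨p, hpJ, hpX⟩ := not_subset.1 hJX
  have hJc : IsClosed (range e) := (isCompact_range he).isClosed
  have hpx : p ∈ ball x δ := by
    by_contra h
    exact not_hasContinuousLog_sub_of_mem_sccInterior hJc hpJ
      (hasContinuousLog_sub_of_forall_mem_ball continuous_subtype_val
        (fun z => ball_subset_ball (min_le_right _ _) (hJ z.2).1) h)
  have hpy : p ∉ ball y δ := fun h => by
    rw [mem_ball, dist_comm] at hpx
    linarith [dist_triangle x p y, mem_ball.1 h]
  let ι : range e → X := fun z => ⟨z, (hJ z.2).2⟩
  have h₀ : HasContinuousLog fun z : range e => toComplex ((H (ι z, t₀) : Plane) - p) :=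
    hasContinuousLog_sub_of_forall_mem_ball (by fun_prop) (fun z => hHε
      ((mem_ball.1 (hJ z.2).1).trans_le (min_le_left _ _))) hpy
  have hF0 : ∀ q : Icc (0 : ℝ) 1 × range e, toComplex ((H (ι q.2, q.1) : Plane) - p) ≠ 0 :=
    fun q h => hpX (sub_eq_zero.1 (toComplex.map_eq_zero_iff.1 h) ▸ (H (ι q.2, q.1)).2)
  have h₁ := h₀.of_homotopy (by fun_prop) hF0 (t₁ := ⟨0, left_mem_Icc.2 zero_le_one⟩)
  simp only [ι, hH0] at h₁
  exact not_hasContinuousLog_sub_of_mem_sccInterior hJc hpJ h₁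

/-- Any homotopy of a connected planar set within itself starting at the
identity fixes every point of the bad set. -/
theorem stmt_12 (X : Set Plane) (hX : IsConnected X)
    (x : Plane) (hx : x ∈ badSet X) (hxX : x ∈ X)
    (H : ↥X × ↥(Set.Icc (0 : ℝ) 1) → ↥X) (hH : Continuous H)
    (hH0 : ∀ y : ↥X, H (y, ⟨0, Set.left_mem_Icc.mpr zero_le_one⟩) = y) :
    ∀ t : ↥(Set.Icc (0 : ℝ) 1), H (⟨x, hxX⟩, t) = ⟨x, hxX⟩ :=
  stmt_12_general X x hx hxX H hH hH0
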